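/- If in an exact sequence 0 → L → M → N → 0 any two of L, M, N have finite Gorenstein weak injective dimension, then so does the third. -/

import Mathlib

open CategoryTheory

universe u

noncomputable section

variable (R : Type u) [Ring R]

/-- Vanishing of `Ext^n_R(N, M)` for left `R`-modules, expressed via the `Ext` bifunctor
on the `ℤ`-linear abelian category `ModuleCat R`. -/
def ExtVanish (n : ℕ) (N M : ModuleCat.{u} R) : Prop :=
  Subsingleton (((_root_.Ext ℤ (ModuleCat.{u} R) n).obj (Opposite.op N)).obj M)

/-- An `R`-module is super finitely presented if it admits a resolution by
finitely generated projective modules. -/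
def SuperFinitelyPresented (N : ModuleCat.{u} R) : Prop :=
  ∃ (F : ℕ → ModuleCat.{u} R) (d : ∀ n, F (n + 1) →ₗ[R] F n) (ε : F 0 →ₗ[R] N),
    (∀ n, Module.Finite R (F n)) ∧ (∀ n, Module.Projective R (F n)) ∧
    Function.Surjective ε ∧ Function.Exact (d 0) ε ∧
    (∀ n, Function.Exact (d (n + 1)) (d n))

/-- An `R`-module `W` is weak injective if `Ext^1_R(N, W) = 0` for every super finitely
presented module `N`. -/
def WeakInjective (W : ModuleCat.{u} R) : Prop :=
  ∀ N : ModuleCat.{u} R, SuperFinitelyPresented R N → ExtVanish R 1 N W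

/-- `wid_R M ≤ n` : `Ext^{n+1}_R(N, M) = 0` for every super finitely presented `N`. -/
def WidLE (M : ModuleCat.{u} R) (n : ℕ) : Prop :=
  ∀ N : ModuleCat.{u} R, SuperFinitelyPresented R N → ExtVanish R (n + 1) N M

/-- The weak injective dimension, as an element of `ℕ∞`. -/
def Wid (M : ModuleCat.{u} R) : ℕ∞ :=
  sInf {c : ℕ∞ | ∃ n : ℕ, c = n ∧ WidLE R M n}

/-- A doubly infinite exact complex of injective modules which stays exact after applying
`Hom_R(W, -)` for every module `W` in the test class `𝒯`. -/
def IsTotallyAcyclicInjComplex (𝒯 : ModuleCat.{u} R → Prop)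
    (I : ℤ → ModuleCat.{u} R) (d : ∀ n : ℤ, I n →ₗ[R] I (n + 1)) : Prop :=
  (∀ n, Module.Injective R (I n)) ∧
  (∀ n, Function.Exact (d n) (d (n + 1))) ∧
  (∀ W : ModuleCat.{u} R, 𝒯 W → ∀ n,
    Function.Exact (fun g : W →ₗ[R] I n => (d n).comp g)
      (fun g : W →ₗ[R] I (n + 1) => (d (n + 1)).comp g))

/-- `M` is Gorenstein injective relative to the test class `𝒯` : `M` is the cokernel
`Coker (I_1 → I_0)` of a `Hom(𝒯, -)`-exact exact complex of injective modules. -/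
def GorensteinRelInjective (𝒯 : ModuleCat.{u} R → Prop) (M : ModuleCat.{u} R) : Prop :=
  ∃ (I : ℤ → ModuleCat.{u} R) (d : ∀ n : ℤ, I n →ₗ[R] I (n + 1)) (π : I 0 →ₗ[R] M),
    IsTotallyAcyclicInjComplex R 𝒯 I d ∧
    Function.Surjective π ∧ Function.Exact (d (-1)) π

/-- Gorenstein weak injective modules: the test class is that of weak injective modules. -/
def GorensteinWeakInjective (M : ModuleCat.{u} R) : Prop :=
  GorensteinRelInjective R (WeakInjective R) M

/-- Gorenstein injective modules: the test class is that of injective modules. -/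
def GorensteinInjective (M : ModuleCat.{u} R) : Prop :=
  GorensteinRelInjective R (fun E => Module.Injective R E) M

/-- The data of an exact sequence `0 → M → G^0 → ⋯ → G^n → 0` (the modules `G^i` for
`i > n` being trivial). -/
def IsFiniteCoresolution (M : ModuleCat.{u} R) (n : ℕ) (G : ℕ → ModuleCat.{u} R)
    (d : ∀ i, G i →ₗ[R] G (i + 1)) (ε : M →ₗ[R] G 0) : Prop :=
  Function.Injective ε ∧ Function.Exact ε (d 0) ∧
  (∀ i, Function.Exact (d i) (d (i + 1))) ∧
  (∀ i, n < i → ∀ x : G i, x = 0)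

/-- `Gwid_R M ≤ n` : `M` has a coresolution of length `n` by Gorenstein weak injective
modules. -/
def GwidLE (M : ModuleCat.{u} R) (n : ℕ) : Prop :=
  ∃ (G : ℕ → ModuleCat.{u} R) (d : ∀ i, G i →ₗ[R] G (i + 1)) (ε : M →ₗ[R] G 0),
    IsFiniteCoresolution R M n G d ε ∧ ∀ i, GorensteinWeakInjective R (G i)

/-- The Gorenstein weak injective dimension, as an element of `ℕ∞`. -/
def Gwid (M : ModuleCat.{u} R) : ℕ∞ :=
  sInf {c : ℕ∞ | ∃ n : ℕ, c = n ∧ GwidLE R M n}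

/-- `Gid_R M ≤ n`, via coresolutions by Gorenstein injective modules. -/
def GidLE (M : ModuleCat.{u} R) (n : ℕ) : Prop :=
  ∃ (G : ℕ → ModuleCat.{u} R) (d : ∀ i, G i →ₗ[R] G (i + 1)) (ε : M →ₗ[R] G 0),
    IsFiniteCoresolution R M n G d ε ∧ ∀ i, GorensteinInjective R (G i)

/-- The Gorenstein injective dimension, as an element of `ℕ∞`. -/
def Gid (M : ModuleCat.{u} R) : ℕ∞ :=
  sInf {c : ℕ∞ | ∃ n : ℕ, c = n ∧ GidLE R M n}

/-- `id_R M ≤ n`, via coresolutions by injective modules. -/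
def IdLE (M : ModuleCat.{u} R) (n : ℕ) : Prop :=
  ∃ (G : ℕ → ModuleCat.{u} R) (d : ∀ i, G i →ₗ[R] G (i + 1)) (ε : M →ₗ[R] G 0),
    IsFiniteCoresolution R M n G d ε ∧ ∀ i, Module.Injective R (G i)

/-- The injective dimension, as an element of `ℕ∞`. -/
def Idim (M : ModuleCat.{u} R) : ℕ∞ :=
  sInf {c : ℕ∞ | ∃ n : ℕ, c = n ∧ IdLE R M n}

/-- The data of an exact sequence `0 → P_n → ⋯ → P_0 → M → 0`. -/
def IsFiniteResolution (M : ModuleCat.{u} R) (n : ℕ) (P : ℕ → ModuleCat.{u} R)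
    (d : ∀ i, P (i + 1) →ₗ[R] P i) (ε : P 0 →ₗ[R] M) : Prop :=
  Function.Surjective ε ∧ Function.Exact (d 0) ε ∧
  (∀ i, Function.Exact (d (i + 1)) (d i)) ∧
  (∀ i, n < i → ∀ x : P i, x = 0)

/-- `pd_R M ≤ n`, via resolutions by projective modules. -/
def PdLE (M : ModuleCat.{u} R) (n : ℕ) : Prop :=
  ∃ (P : ℕ → ModuleCat.{u} R) (d : ∀ i, P (i + 1) →ₗ[R] P i) (ε : P 0 →ₗ[R] M),
    IsFiniteResolution R M n P d ε ∧ ∀ i, Module.Projective R (P i)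

end

variable (R : Type u) [Ring R]

/-- A short exact sequence `0 → L → M → N → 0` of `R`-modules. -/
def ShortExactSeq (L M N : ModuleCat.{u} R) (f : L →ₗ[R] M) (g : M →ₗ[R] N) : Prop :=
  Function.Injective f ∧ Function.Surjective g ∧ Function.Exact f g

/-- Exactness of `0 → Hom(C, X) → Hom(B, X) → Hom(A, X) → 0` induced by
`0 → A → B → C → 0`. -/
def HomContraExact (X : ModuleCat.{u} R) {A B C : ModuleCat.{u} R}
    (f : A →ₗ[R] B) (g : B →ₗ[R] C) : Prop :=
  Function.Injective (fun h : C →ₗ[R] X => h.comp g) ∧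
  Function.Exact (fun h : C →ₗ[R] X => h.comp g) (fun h : B →ₗ[R] X => h.comp f) ∧
  Function.Surjective (fun h : B →ₗ[R] X => h.comp f)

/-- A short exact sequence is `GWI`-copure exact if `Hom_R(-, X)` leaves it exact for
every Gorenstein weak injective module `X`. -/
def GWICopureExact {A B C : ModuleCat.{u} R} (f : A →ₗ[R] B) (g : B →ₗ[R] C) : Prop :=
  ShortExactSeq R A B C f g ∧
  ∀ X : ModuleCat.{u} R, GorensteinWeakInjective R X → HomContraExact R X f g

/-- `M` is `GWI`-copure injective if `Hom_R(-, M)` is exact on every `GWI`-copure exact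
sequence. -/
def GWICopureInjectiveMod (M : ModuleCat.{u} R) : Prop :=
  ∀ (A B C : ModuleCat.{u} R) (f : A →ₗ[R] B) (g : B →ₗ[R] C),
    GWICopureExact R f g → HomContraExact R M f g

/-- `φ : M → G` is a Gorenstein weak injective preenvelope of `M`. -/
def GWIPreenvelope (M G : ModuleCat.{u} R) (φ : M →ₗ[R] G) : Prop :=
  GorensteinWeakInjective R G ∧
  ∀ G' : ModuleCat.{u} R, GorensteinWeakInjective R G' →
    ∀ f : M →ₗ[R] G', ∃ g : G →ₗ[R] G', g.comp φ = f

/-- A `WI`-pure Tate injective resolution of `M` : an injective resolution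
`0 → M → E^0 → E^1 → ⋯`, a `WI`-pure exact complex `T` of injectives, and a chain map
`u : E → T` which is an isomorphism in all sufficiently large degrees. -/
def WIPureTateInjectiveResolution (M : ModuleCat.{u} R)
    (E : ℕ → ModuleCat.{u} R) (dE : ∀ n, E n →ₗ[R] E (n + 1)) (ε : M →ₗ[R] E 0)
    (T : ℤ → ModuleCat.{u} R) (dT : ∀ n : ℤ, T n →ₗ[R] T (n + 1))
    (u : ∀ n : ℕ, E n →ₗ[R] T n) : Prop :=
  (∀ n, Module.Injective R (E n)) ∧ Function.Injective ε ∧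
  Function.Exact ε (dE 0) ∧ (∀ n, Function.Exact (dE n) (dE (n + 1))) ∧
  IsTotallyAcyclicInjComplex R (WeakInjective R) T dT ∧
  (∀ n : ℕ, (dT n).comp (u n) = (u (n + 1)).comp (dE n)) ∧
  ∃ N : ℕ, ∀ n, N ≤ n → Function.Bijective (u n)

/-- Vanishing of the relative Tate cohomology `Êxt^i_GWI(N, M)` for all `i ∈ ℤ`,
computed from the `WI`-pure exact complex `T` : the complex `Hom_R(N, T)` is exact. -/
def ExtHatVanishesAll (N : ModuleCat.{u} R) (T : ℤ → ModuleCat.{u} R)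
    (dT : ∀ n : ℤ, T n →ₗ[R] T (n + 1)) : Prop :=
  ∀ n : ℤ, Function.Exact (fun g : N →ₗ[R] T n => (dT n).comp g)
    (fun g : N →ₗ[R] T (n + 1) => (dT (n + 1)).comp g)

/-!
Let `𝒢` be the class of Gorenstein weak injective modules. It contains the injective modules,
it is closed under extensions (the witnessing complex of an extension is the mapping cone of a
chain map between the witnessing complexes of the outer terms), and every `G ∈ 𝒢` embeds into an
injective module with cokernel in `𝒢`. For any such class, a module has a finite
`𝒢`-coresolution if and only if it has one of the form `0 → X → E⁰ → ⋯ → Eⁿ⁻¹ → G → 0` with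
injective `Eⁱ` and `G ∈ 𝒢`, and for these special coresolutions the two-out-of-three property
follows by dimension shifting: the middle term by the horseshoe lemma, the kernel through the
third isomorphism theorem, and the cokernel through a pushout along an embedding of the kernel
into an injective module, a quotient of an injective module by an injective submodule being
injective.
-/

section LinearAlgebra

open LinearMap

variable {R : Type u} [Ring R] {M N P W : Type u} [AddCommGroup M] [Module R M]
  [AddCommGroup N] [Module R N] [AddCommGroup P] [Module R P] [AddCommGroup W] [Module R W]

theorem LinearMap.exists_comp_eq_of_surjective {g : M →ₗ[R] N} (hg : Function.Surjective g)
    (φ : M →ₗ[R] P) (h : ker g ≤ ker φ) : ∃ ψ : N →ₗ[R] P, ψ ∘ₗ g = φ := by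
  refine ⟨(ker g).liftQ φ h ∘ₗ (g.quotKerEquivOfSurjective hg).symm.toLinearMap, ?_⟩
  ext x
  have : (g.quotKerEquivOfSurjective hg).symm (g x) = Submodule.Quotient.mk x := by
    rw [LinearEquiv.symm_apply_eq]; rfl
  simp [this]

theorem LinearMap.exists_comp_eq_of_injective {f : N →ₗ[R] P} (hf : Function.Injective f)
    (φ : M →ₗ[R] P) (h : range φ ≤ range f) : ∃ ψ : M →ₗ[R] N, f ∘ₗ ψ = φ := by
  refine ⟨(LinearEquiv.ofInjective f hf).symm.toLinearMap ∘ₗ φ.codRestrict (range f)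
    (fun x => h ⟨x, rfl⟩), ?_⟩
  ext x
  simp

theorem Module.Injective.exists_comp_eq (hW : Module.Injective R W) (g : M →ₗ[R] N)
    (φ : M →ₗ[R] W) (h : ker g ≤ ker φ) : ∃ ψ : N →ₗ[R] W, ψ ∘ₗ g = φ := by
  obtain ⟨ψ₀, hψ₀⟩ := g.rangeRestrict.exists_comp_eq_of_surjective g.surjective_rangeRestrict φ
    (by rwa [ker_rangeRestrict])
  obtain ⟨ψ, hψ⟩ := hW.out (range g).subtype Subtype.val_injective ψ₀
  exact ⟨ψ, by ext x; simpa [← hψ₀] using hψ (g.rangeRestrict x)⟩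

theorem Module.Injective.exists_retraction (hW : Module.Injective R W) {j : W →ₗ[R] M}
    (hj : Function.Injective j) : ∃ t : M →ₗ[R] W, t ∘ₗ j = LinearMap.id :=
  hW.exists_comp_eq j LinearMap.id (by simp [ker_eq_bot.mpr hj])

instance Module.Injective.prod [Module.Injective R M] [Module.Injective R N] :
    Module.Injective R (M × N) where
  out _ _ _ _ _ _ f hf g := by
    obtain ⟨h₁, hh₁⟩ := Module.Injective.out (Q := M) f hf (fst R M N ∘ₗ g)
    obtain ⟨h₂, hh₂⟩ := Module.Injective.out (Q := N) f hf (snd R M N ∘ₗ g)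
    exact ⟨h₁.prod h₂, fun x => Prod.ext (hh₁ x) (hh₂ x)⟩

theorem Module.Injective.of_subsingleton [Subsingleton M] : Module.Injective R M where
  out _ _ _ _ _ _ _ _ _ := ⟨0, fun _ => Subsingleton.elim _ _⟩

theorem Module.Injective.of_retract [Module.Injective R M] (s : N →ₗ[R] M) (p : M →ₗ[R] N)
    (hps : p ∘ₗ s = LinearMap.id) : Module.Injective R N where
  out _ _ _ _ _ _ f hf g := by
    obtain ⟨h, hh⟩ := Module.Injective.out (Q := M) f hf (s ∘ₗ g)
    exact ⟨p ∘ₗ h, fun x => by simpa [hh] using LinearMap.congr_fun hps (g x)⟩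

theorem Function.Exact.exists_injective_comp_eq {Q : Type u} [AddCommGroup Q] [Module R Q]
    {f : M →ₗ[R] N} {g : N →ₗ[R] P} {h : N →ₗ[R] Q} (hg : Function.Exact f g)
    (hh : Function.Exact f h) (hgs : Function.Surjective g) :
    ∃ e : P →ₗ[R] Q, Function.Injective e ∧ e ∘ₗ g = h := by
  obtain ⟨e, he⟩ := exists_comp_eq_of_surjective hgs h (by
    rw [hg.linearMap_ker_eq, hh.linearMap_ker_eq])
  refine ⟨e, ?_, he⟩
  rw [← ker_eq_bot, eq_bot_iff]
  intro p hp
  obtain ⟨x, rfl⟩ := hgs p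
  rw [Submodule.mem_bot, hg, ← hh]
  simpa [← he] using hp

end LinearAlgebra

section ShortExact

open LinearMap

variable {R : Type u} [Ring R]

theorem ShortExactSeq.comp_linearEquiv {A B C B' : ModuleCat.{u} R} {f : A →ₗ[R] B}
    {g : B →ₗ[R] C} (h : ShortExactSeq R A B C f g) (e : B ≃ₗ[R] B') :
    ShortExactSeq R A B' C (e.toLinearMap ∘ₗ f) (g ∘ₗ e.symm.toLinearMap) :=
  ⟨e.injective.comp h.1, h.2.1.comp e.symm.surjective,
    (LinearEquiv.conj_exact_iff_exact f g e).mpr h.2.2⟩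

/-- Noether's third isomorphism theorem: `L ⊆ M ⊆ E` gives `0 → M/L → E/L → E/M → 0`. -/
theorem ShortExactSeq.exists_quotient_comp {L M N E C : ModuleCat.{u} R} {f : L →ₗ[R] M}
    {g : M →ₗ[R] N} {e : M →ₗ[R] E} {q : E →ₗ[R] C} (hfg : ShortExactSeq R L M N f g)
    (heq : ShortExactSeq R M E C e q) :
    ∃ (V : ModuleCat.{u} R) (p : E →ₗ[R] V) (ι : N →ₗ[R] V) (ρ : V →ₗ[R] C),
      ShortExactSeq R L E V (e ∘ₗ f) p ∧ ShortExactSeq R N V C ι ρ := by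
  obtain ⟨hf, hg, hfg⟩ := hfg
  obtain ⟨he, hq, heq⟩ := heq
  set K := range (e ∘ₗ f)
  have hK : K ≤ ker q := by
    rintro _ ⟨l, rfl⟩
    exact heq.apply_apply_eq_zero (f l)
  obtain ⟨ι, hι⟩ := g.exists_comp_eq_of_surjective hg (K.mkQ ∘ₗ e) (by
    intro m hm
    obtain ⟨l, rfl⟩ := (hfg m).mp hm
    simp [K])
  have hι' (m : M) : ι (g m) = K.mkQ (e m) := LinearMap.congr_fun hι m
  refine ⟨ModuleCat.of R (E ⧸ K), K.mkQ, ι, K.liftQ q hK,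
    ⟨he.comp hf, K.mkQ_surjective, exact_map_mkQ_range _⟩, ?_, ?_, ?_⟩
  · rw [← ker_eq_bot, eq_bot_iff]
    intro n hn
    obtain ⟨m, rfl⟩ := hg n
    obtain ⟨l, hl⟩ := (Submodule.Quotient.mk_eq_zero K).mp ((hι' m).symm.trans hn)
    rw [Submodule.mem_bot, ← he hl]
    exact hfg.apply_apply_eq_zero l
  · intro c
    obtain ⟨y, rfl⟩ := hq c
    exact ⟨K.mkQ y, rfl⟩
  · intro v
    obtain ⟨y, rfl⟩ := K.mkQ_surjective v
    constructor
    · intro hy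
      obtain ⟨m, rfl⟩ := (heq y).mp hy
      exact ⟨g m, hι' m⟩
    · rintro ⟨n, hn⟩
      obtain ⟨m, rfl⟩ := hg n
      rw [← hn, hι' m]
      exact heq.apply_apply_eq_zero m

theorem ShortExactSeq.pushout_inl {L M N F : ModuleCat.{u} R} {f : L →ₗ[R] M}
    {g : M →ₗ[R] N} (hfg : ShortExactSeq R L M N f g) (e : L →ₗ[R] F) :
    ∃ r, ShortExactSeq R F (ModuleCat.of R ((F × M) ⧸ range (e.prod f))) N
      ((range (e.prod f)).mkQ ∘ₗ inl R F M) r := by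
  obtain ⟨hf, hg, hfg⟩ := hfg
  set K := range (e.prod f)
  have hK : K ≤ ker (g ∘ₗ snd R F M) := by
    rintro _ ⟨l, rfl⟩
    exact hfg.apply_apply_eq_zero l
  refine ⟨K.liftQ _ hK, ?_, ?_, ?_⟩
  · rw [← ker_eq_bot, eq_bot_iff]
    intro x hx
    obtain ⟨l, hl⟩ := (Submodule.Quotient.mk_eq_zero K).mp hx
    obtain rfl : l = 0 := hf (by simpa using congrArg Prod.snd hl)
    simpa using (congrArg Prod.fst hl).symm
  · intro n
    obtain ⟨m, rfl⟩ := hg n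
    exact ⟨K.mkQ (0, m), rfl⟩
  · intro z
    obtain ⟨⟨x, m⟩, rfl⟩ := K.mkQ_surjective z
    constructor
    · intro hm
      obtain ⟨l, rfl⟩ := (hfg m).mp hm
      refine ⟨x - e l, (Submodule.Quotient.eq K).mpr ⟨-l, ?_⟩⟩
      simp
    · rintro ⟨x', hx'⟩
      rw [← hx']
      simp

/-- The pushout of `M ← L → F` along two monomorphisms. -/
theorem ShortExactSeq.exists_pushout {L M N F L₁ : ModuleCat.{u} R} {f : L →ₗ[R] M}
    {g : M →ₗ[R] N} {e : L →ₗ[R] F} {q : F →ₗ[R] L₁} (hfg : ShortExactSeq R L M N f g)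
    (heq : ShortExactSeq R L F L₁ e q) :
    ∃ (Z : ModuleCat.{u} R) (i : M →ₗ[R] Z) (p : Z →ₗ[R] L₁) (j : F →ₗ[R] Z) (r : Z →ₗ[R] N),
      ShortExactSeq R M Z L₁ i p ∧ ShortExactSeq R F Z N j r := by
  obtain ⟨r, hr⟩ := hfg.pushout_inl e
  obtain ⟨p, hp⟩ := heq.pushout_inl f
  let σ : ((M × F) ⧸ range (f.prod e)) ≃ₗ[R] ((F × M) ⧸ range (e.prod f)) :=
    Submodule.Quotient.equiv _ _ (LinearEquiv.prodComm R M F) (by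
      rw [← range_comp]; rfl)
  exact ⟨_, _, _, _, r, hp.comp_linearEquiv σ, hr⟩

theorem ShortExactSeq.exists_prod_of_injective {E Z C' E' C₁ : ModuleCat.{u} R}
    {j : E →ₗ[R] Z} {r : Z →ₗ[R] C'} {e : C' →ₗ[R] E'} {q : E' →ₗ[R] C₁}
    (hjr : ShortExactSeq R E Z C' j r) (hE : Module.Injective R E)
    (heq : ShortExactSeq R C' E' C₁ e q) :
    ∃ (θ : Z →ₗ[R] ModuleCat.of R (E × E')) (p : ModuleCat.of R (E × E') →ₗ[R] C₁),
      ShortExactSeq R Z (ModuleCat.of R (E × E')) C₁ θ p := by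
  obtain ⟨hj, hr, hjr⟩ := hjr
  obtain ⟨he, hq, heq⟩ := heq
  obtain ⟨t, ht⟩ := hE.exists_retraction hj
  have ht' (x : E) : t (j x) = x := LinearMap.congr_fun ht x
  refine ⟨t.prod (e ∘ₗ r), q ∘ₗ snd R E E', ?_, hq.comp Prod.snd_surjective, ?_⟩
  · rw [← ker_eq_bot, eq_bot_iff]
    intro z hz
    have h1 : t z = 0 := congrArg Prod.fst hz
    have h2 : r z = 0 := he (by simpa using congrArg Prod.snd hz)
    obtain ⟨x, rfl⟩ := (hjr z).mp h2
    rw [ht'] at h1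
    simp [h1]
  · rintro ⟨a, b⟩
    constructor
    · intro hb
      obtain ⟨c, rfl⟩ := (heq b).mp hb
      obtain ⟨z, rfl⟩ := hr c
      refine ⟨z + j (a - t z), Prod.ext ?_ ?_⟩
      · simp [ht']
      · simp [hjr.apply_apply_eq_zero]
    · rintro ⟨z, hz⟩
      rw [← hz]
      exact heq.apply_apply_eq_zero (r z)

theorem ShortExactSeq.injective_right {F E V : ModuleCat.{u} R} {j : F →ₗ[R] E}
    {p : E →ₗ[R] V} (h : ShortExactSeq R F E V j p) (hF : Module.Injective R F)
    (hE : Module.Injective R E) : Module.Injective R V := by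
  obtain ⟨t, ht⟩ := hF.exists_retraction h.1
  obtain ⟨σ, -, hσ⟩ := h.2.2.splitInjectiveEquiv h.2.1 ⟨t, ht⟩
  refine Module.Injective.of_retract (M := E) (σ.symm.toLinearMap ∘ₗ inr R F V) p ?_
  rw [hσ]
  ext v
  simp

end ShortExact

theorem Int.exists_seq_of_rel {P : ℤ → Sort*} (r : ∀ n, P n → P (n + 1) → Prop)
    (hup : ∀ n x, ∃ y, r n x y) (hdown : ∀ n y, ∃ x, r n x y) (x₀ : P (-1)) :
    ∃ s : ∀ n, P n, s (-1) = x₀ ∧ ∀ n, r n (s n) (s (n + 1)) := by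
  choose up hup using hup
  choose down hdown using hdown
  let u : ∀ k : ℕ, P k := fun k =>
    Nat.rec (motive := fun k => P k) (up (-1) x₀) (fun k x => up k x) k
  let d : ∀ k : ℕ, P (Int.negSucc (k + 1)) := fun k =>
    Nat.rec (motive := fun k => P (Int.negSucc (k + 1))) (down (Int.negSucc 1) x₀)
      (fun k x => down (Int.negSucc (k + 2)) x) k
  refine ⟨fun n => match n with
    | (k : ℕ) => u k
    | Int.negSucc 0 => x₀
    | Int.negSucc (k + 1) => d k, rfl, ?_⟩
  rintro (k | _ | _ | k)
  · exact hup k (u k)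
  · exact hup (-1) x₀
  · exact hdown (Int.negSucc 1) x₀
  · exact hdown (Int.negSucc (k + 2)) (d k)

section Twist

open LinearMap

variable {S : Type*} [Ring S] {A₀ A₁ A₂ B₀ B₁ B₂ : Type*} [AddCommGroup A₀] [AddCommGroup A₁]
  [AddCommGroup A₂] [AddCommGroup B₀] [AddCommGroup B₁] [AddCommGroup B₂] [Module S A₀]
  [Module S A₁] [Module S A₂] [Module S B₀] [Module S B₁] [Module S B₂]

/-- The differential of the mapping cone of `l`. -/
def LinearMap.twist (a : A₀ →ₗ[S] A₁) (b : B₀ →ₗ[S] B₁) (l : B₀ →ₗ[S] A₁) :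
    A₀ × B₀ →ₗ[S] A₁ × B₁ :=
  (a ∘ₗ fst S A₀ B₀ + l ∘ₗ snd S A₀ B₀).prod (b ∘ₗ snd S A₀ B₀)

@[simp]
theorem LinearMap.twist_apply (a : A₀ →ₗ[S] A₁) (b : B₀ →ₗ[S] B₁) (l : B₀ →ₗ[S] A₁)
    (x : A₀ × B₀) : twist a b l x = (a x.1 + l x.2, b x.2) :=
  rfl

theorem Function.Exact.twist {a₀ : A₀ →ₗ[S] A₁} {a₁ : A₁ →ₗ[S] A₂} {b₀ : B₀ →ₗ[S] B₁}
    {b₁ : B₁ →ₗ[S] B₂} {l₀ : B₀ →ₗ[S] A₁} {l₁ : B₁ →ₗ[S] A₂} (ha : Function.Exact a₀ a₁)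
    (hb : Function.Exact b₀ b₁) (hl : a₁ ∘ₗ l₀ + l₁ ∘ₗ b₀ = 0) :
    Function.Exact (twist a₀ b₀ l₀) (twist a₁ b₁ l₁) := by
  have hl' (y : B₀) : a₁ (l₀ y) + l₁ (b₀ y) = 0 := LinearMap.congr_fun hl y
  rintro ⟨x, y⟩
  simp only [twist_apply, Set.mem_range, Prod.ext_iff, Prod.exists]
  constructor
  · rintro ⟨hx, hy⟩
    obtain ⟨y', rfl⟩ := (hb y).mp hy
    obtain ⟨x', hx'⟩ := (ha (x - l₀ y')).mp (by
      rw [map_sub, sub_eq_zero]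
      exact (eq_neg_of_add_eq_zero_left hx).trans (eq_neg_of_add_eq_zero_left (hl' y')).symm)
    exact ⟨x', y', by rw [hx', sub_add_cancel], rfl⟩
  · rintro ⟨x', y', rfl, rfl⟩
    simp [ha.apply_apply_eq_zero, hb.apply_apply_eq_zero, hl']

end Twist

section GorensteinRelInjective

open LinearMap

variable {R : Type u} [Ring R] {𝒯 : ModuleCat.{u} R → Prop}

theorem IsTotallyAcyclicInjComplex.shift {I : ℤ → ModuleCat.{u} R}
    {d : ∀ n : ℤ, I n →ₗ[R] I (n + 1)} (hI : IsTotallyAcyclicInjComplex R 𝒯 I d) :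
    IsTotallyAcyclicInjComplex R 𝒯 (fun n => I (n + 1)) (fun n => d (n + 1)) :=
  ⟨fun n => hI.1 (n + 1), fun n => hI.2.1 (n + 1), fun W hW n => hI.2.2 W hW (n + 1)⟩

theorem IsTotallyAcyclicInjComplex.exists_lift {I : ℤ → ModuleCat.{u} R}
    {d : ∀ n : ℤ, I n →ₗ[R] I (n + 1)} (hI : IsTotallyAcyclicInjComplex R 𝒯 I d)
    {G : ModuleCat.{u} R} {π : I 0 →ₗ[R] G} (hπ : Function.Surjective π)
    (hdπ : Function.Exact (d (-1)) π) {W : ModuleCat.{u} R} (hW : 𝒯 W) (h : W →ₗ[R] G) :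
    ∃ k : W →ₗ[R] I 0, π ∘ₗ k = h := by
  obtain ⟨e, he, heπ⟩ := hdπ.exists_injective_comp_eq (hI.2.1 (-1)) hπ
  have heπ' (x : I 0) : e (π x) = d 0 x := LinearMap.congr_fun heπ x
  obtain ⟨k, hk⟩ := (hI.2.2 W hW 0 (e ∘ₗ h)).mp (by
    ext w
    obtain ⟨x, hx⟩ := hπ (h w)
    simpa [← hx, heπ'] using (hI.2.1 0).apply_apply_eq_zero x)
  refine ⟨k, ext fun w => he ?_⟩
  simpa [heπ'] using LinearMap.congr_fun hk w

theorem GorensteinRelInjective.of_injective {E : ModuleCat.{u} R} (hE : Module.Injective R E) :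
    GorensteinRelInjective R 𝒯 E := by
  let δ : E × E →ₗ[R] E × E := inl R E E ∘ₗ snd R E E
  have hδ : Function.Exact δ δ := by
    rintro ⟨x, y⟩
    simp [δ, Prod.ext_iff, eq_comm]
  refine ⟨fun _ => ModuleCat.of R (E × E), fun _ => δ, snd R E E,
    ⟨fun _ => inferInstance, fun _ => hδ, fun W _ n => ?_⟩, Prod.snd_surjective, ?_⟩
  · intro φ
    constructor
    · intro hφ
      refine ⟨inr R E E ∘ₗ fst R E E ∘ₗ φ, ext fun w => ?_⟩
      have : (φ w).2 = 0 := by simpa [δ] using congrArg Prod.fst (LinearMap.congr_fun hφ w)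
      simp [δ, Prod.ext_iff, this]
    · rintro ⟨ψ, rfl⟩
      ext w <;> simp [δ]
  · rintro ⟨x, y⟩
    simp [δ, Prod.ext_iff, eq_comm]

theorem GorensteinRelInjective.exists_cosyzygy {G : ModuleCat.{u} R}
    (hG : GorensteinRelInjective R 𝒯 G) :
    ∃ (E C : ModuleCat.{u} R) (e : G →ₗ[R] E) (q : E →ₗ[R] C), Module.Injective R E ∧
      ShortExactSeq R G E C e q ∧ GorensteinRelInjective R 𝒯 C ∧
      ∀ W : ModuleCat.{u} R, 𝒯 W → ∀ h : W →ₗ[R] C, ∃ k : W →ₗ[R] E, q ∘ₗ k = h := by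
  obtain ⟨I, d, π, hI, hπ, hdπ⟩ := hG
  obtain ⟨e, he, heπ⟩ : ∃ e : G →ₗ[R] I 1, Function.Injective e ∧ e ∘ₗ π = d 0 :=
    hdπ.exists_injective_comp_eq (hI.2.1 (-1)) hπ
  have hrange : range e = range (d 0) := by
    rw [← heπ, range_comp, range_eq_top.mpr hπ, Submodule.map_top]
  have hq : Function.Exact (d (-1 + 1)) (range (d 0)).mkQ := exact_map_mkQ_range (d 0)
  refine ⟨I 1, ModuleCat.of R (I 1 ⧸ range (d 0)), e, (range (d 0)).mkQ, hI.1 1,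
    ⟨he, Submodule.mkQ_surjective _, ?_⟩,
    ⟨_, _, _, hI.shift, Submodule.mkQ_surjective _, hq⟩,
    fun W hW h => hI.shift.exists_lift (Submodule.mkQ_surjective _) hq hW h⟩
  rw [LinearMap.exact_iff, Submodule.ker_mkQ, hrange]

theorem GorensteinRelInjective.exists_lift_of_shortExact {A X B : ModuleCat.{u} R}
    {f : A →ₗ[R] X} {g : X →ₗ[R] B} (hA : GorensteinRelInjective R 𝒯 A)
    (hfg : ShortExactSeq R A X B f g) {W : ModuleCat.{u} R} (hW : 𝒯 W) (φ : W →ₗ[R] B) :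
    ∃ s : W →ₗ[R] X, g ∘ₗ s = φ := by
  obtain ⟨hf, hg, hfg⟩ := hfg
  obtain ⟨E, C, e, q, hE, ⟨he, -, heq⟩, -, hlift⟩ := hA.exists_cosyzygy
  obtain ⟨u, hu⟩ := hE.exists_comp_eq f e (by simp [ker_eq_bot.mpr hf])
  have hu' (a : A) : u (f a) = e a := LinearMap.congr_fun hu a
  obtain ⟨h, hh⟩ := exists_comp_eq_of_surjective hg (q ∘ₗ u) (by
    intro x hx
    obtain ⟨a, rfl⟩ := (hfg x).mp hx
    simpa [hu'] using heq.apply_apply_eq_zero a)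
  have hh' (x : X) : h (g x) = q (u x) := LinearMap.congr_fun hh x
  obtain ⟨k, hk⟩ := hlift W hW (h ∘ₗ φ)
  -- `X` is the pullback of `E → C ← B`, and `(k, φ)` lands in it.
  have hθ : Function.Injective (u.prod g) := by
    rw [← ker_eq_bot, eq_bot_iff]
    intro x hx
    obtain ⟨a, rfl⟩ := (hfg x).mp (congrArg Prod.snd hx)
    have : e a = 0 := by simpa [hu'] using congrArg Prod.fst hx
    simp [he (this.trans (map_zero e).symm)]
  obtain ⟨s, hs⟩ := exists_comp_eq_of_injective hθ (k.prod φ) (by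
    rintro _ ⟨w, rfl⟩
    obtain ⟨x, hx⟩ := hg (φ w)
    obtain ⟨a, ha⟩ := (heq (k w - u x)).mp (by
      rw [map_sub, sub_eq_zero]
      simpa [← hx, hh'] using LinearMap.congr_fun hk w)
    refine ⟨x + f a, Prod.ext ?_ ?_⟩
    · simp [hu', ha]
    · simp [hx, hfg.apply_apply_eq_zero])
  exact ⟨s, ext fun w => congrArg Prod.snd (LinearMap.congr_fun hs w)⟩

theorem IsTotallyAcyclicInjComplex.cone {IA IB : ℤ → ModuleCat.{u} R}
    {dA : ∀ n : ℤ, IA n →ₗ[R] IA (n + 1)} {dB : ∀ n : ℤ, IB n →ₗ[R] IB (n + 1)}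
    (hA : IsTotallyAcyclicInjComplex R 𝒯 IA dA) (hB : IsTotallyAcyclicInjComplex R 𝒯 IB dB)
    (l : ∀ n, IB n →ₗ[R] IA (n + 1)) (hl : ∀ n, dA (n + 1) ∘ₗ l n + l (n + 1) ∘ₗ dB n = 0) :
    IsTotallyAcyclicInjComplex R 𝒯 (fun n => ModuleCat.of R (IA n × IB n))
      (fun n => twist (dA n) (dB n) (l n)) := by
  refine ⟨fun n => ?_, fun n => (hA.2.1 n).twist (hB.2.1 n) (hl n), fun W hW n => ?_⟩
  · have := hA.1 n
    have := hB.1 n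
    infer_instance
  have hladder (m : ℤ) : compRight ℤ (M := W) (twist (dA m) (dB m) (l m)) ∘ₗ
      (prodEquiv (S := ℤ)).toLinearMap = (prodEquiv (S := ℤ)).toLinearMap ∘ₗ
        twist (compRight ℤ (dA m)) (compRight ℤ (dB m)) (compRight ℤ (l m)) := by
    ext ⟨φ, ψ⟩ w <;> simp
  refine Function.Exact.of_ladder_linearEquiv_of_exact (hladder n) (hladder (n + 1))
    ((hA.2.2 W hW n).twist (hB.2.2 W hW n) ?_)
  ext φ w
  simpa using LinearMap.congr_fun (hl n) (φ w)

theorem IsTotallyAcyclicInjComplex.exists_twisting {IA IB : ℤ → ModuleCat.{u} R}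
    {dA : ∀ n : ℤ, IA n →ₗ[R] IA (n + 1)} {dB : ∀ n : ℤ, IB n →ₗ[R] IB (n + 1)}
    (h𝒯 : ∀ E : ModuleCat.{u} R, Module.Injective R E → 𝒯 E)
    (hA : IsTotallyAcyclicInjComplex R 𝒯 IA dA) (hB : IsTotallyAcyclicInjComplex R 𝒯 IB dB)
    (l₀ : IB (-1) →ₗ[R] IA (-1 + 1)) (hl₀ : ker (dB (-1)) ≤ ker (dA (-1 + 1) ∘ₗ l₀)) :
    ∃ l : ∀ n, IB n →ₗ[R] IA (n + 1),
      l (-1) = l₀ ∧ ∀ n, dA (n + 1) ∘ₗ l n + l (n + 1) ∘ₗ dB n = 0 := by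
  let P (n : ℤ) := {l : IB n →ₗ[R] IA (n + 1) // ker (dB n) ≤ ker (dA (n + 1) ∘ₗ l)}
  let r (n : ℤ) (l : P n) (l' : P (n + 1)) : Prop := dA (n + 1) ∘ₗ l.1 + l'.1 ∘ₗ dB n = 0
  have up (n : ℤ) : ∀ l : P n, ∃ l', r n l l' := by
    rintro ⟨l, hl⟩
    obtain ⟨l', hl'⟩ := (hA.1 (n + 1 + 1)).exists_comp_eq (dB n) (-(dA (n + 1) ∘ₗ l))
      (fun y hy => by simpa using hl hy)
    refine ⟨⟨l', fun y hy => ?_⟩, show dA (n + 1) ∘ₗ l + l' ∘ₗ dB n = 0 by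
      rw [hl', add_neg_cancel]⟩
    obtain ⟨b, rfl⟩ := (hB.2.1 n y).mp hy
    have : l' (dB n b) = -dA (n + 1) (l b) := LinearMap.congr_fun hl' b
    simpa [this] using (hA.2.1 (n + 1)).apply_apply_eq_zero (l b)
  have down (n : ℤ) : ∀ l' : P (n + 1), ∃ l, r n l l' := by
    rintro ⟨l', hl'⟩
    obtain ⟨l, hl⟩ := (hA.2.2 (IB n) (h𝒯 _ (hB.1 n)) (n + 1) (-(l' ∘ₗ dB n))).mp (by
      ext b
      simpa using hl' ((hB.2.1 n).apply_apply_eq_zero b))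
    replace hl : dA (n + 1) ∘ₗ l = -(l' ∘ₗ dB n) := hl
    refine ⟨⟨l, fun y hy => ?_⟩, show dA (n + 1) ∘ₗ l + l' ∘ₗ dB n = 0 by
      rw [hl, neg_add_cancel]⟩
    have : dB n y = 0 := hy
    simpa [this] using LinearMap.congr_fun hl y
  obtain ⟨s, hs₀, hs⟩ := Int.exists_seq_of_rel r up down ⟨l₀, hl₀⟩
  exact ⟨fun n => (s n).1, congrArg Subtype.val hs₀, hs⟩

/-- Horseshoe lemma: the witnessing complex of `X` is the mapping cone of a chain map
`IB → IA[1]` extending the connecting map `IB (-1) → A`. -/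
theorem GorensteinRelInjective.of_shortExact
    (h𝒯 : ∀ E : ModuleCat.{u} R, Module.Injective R E → 𝒯 E) {A X B : ModuleCat.{u} R}
    {f : A →ₗ[R] X} {g : X →ₗ[R] B} (hfg : ShortExactSeq R A X B f g)
    (hA : GorensteinRelInjective R 𝒯 A) (hB : GorensteinRelInjective R 𝒯 B) :
    GorensteinRelInjective R 𝒯 X := by
  obtain ⟨IB, dB, πB, hTB, hπB, hdπB⟩ := hB
  obtain ⟨s, hs⟩ := hA.exists_lift_of_shortExact hfg (h𝒯 _ (hTB.1 0)) πB
  have hs' (b : IB 0) : g (s b) = πB b := LinearMap.congr_fun hs b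
  obtain ⟨IA, dA, πA, hTA, hπA, hdπA⟩ := hA
  obtain ⟨hf, -, hfg⟩ := hfg
  obtain ⟨τ, hτ⟩ := exists_comp_eq_of_injective hf (s ∘ₗ dB (-1)) (by
    rintro _ ⟨b, rfl⟩
    exact (hfg _).mp (by simpa [hs'] using hdπB.apply_apply_eq_zero b))
  have hτ' (b : IB (-1)) : f (τ b) = s (dB (-1) b) := LinearMap.congr_fun hτ b
  obtain ⟨l₀, hl₀⟩ := hTA.exists_lift hπA hdπA (h𝒯 _ (hTB.1 (-1))) (-τ)
  obtain ⟨l, rfl, hl⟩ := hTA.exists_twisting h𝒯 hTB l₀ (by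
    intro y hy
    have hτy : τ y = 0 := hf (by simp [hτ', show dB (-1) y = 0 from hy])
    obtain ⟨a, ha⟩ := (hdπA (l₀ y)).mp (by simpa [hτy] using LinearMap.congr_fun hl₀ y)
    simpa [← ha] using (hTA.2.1 (-1)).apply_apply_eq_zero a)
  have hl₀' (b : IB (-1)) : πA (l (-1) b) = -τ b := LinearMap.congr_fun hl₀ b
  refine ⟨_, _, f ∘ₗ πA ∘ₗ fst R (IA 0) (IB 0) + s ∘ₗ snd R (IA 0) (IB 0),
    hTA.cone hTB l hl, fun x => ?_, ?_⟩
  · obtain ⟨b, hb⟩ := hπB (g x)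
    obtain ⟨a', ha'⟩ := (hfg (x - s b)).mp (by simp [hs', hb])
    obtain ⟨a, rfl⟩ := hπA a'
    exact ⟨(a, b), by simp [ha']⟩
  · rintro ⟨a, b⟩
    constructor
    · intro h0
      have hb : πB b = 0 := by
        simpa [hs', hfg.apply_apply_eq_zero] using congrArg g h0
      obtain ⟨b', rfl⟩ := (hdπB b).mp hb
      have h1 : πA a + τ b' = 0 := hf (by simpa [hτ'] using h0)
      obtain ⟨a', ha'⟩ := (hdπA (a - l (-1) b')).mp (by simp [hl₀', h1])
      exact ⟨(a', b'), by simp [ha']⟩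
    · rintro ⟨⟨a', b'⟩, h⟩
      rw [← h]
      simp [hdπA.apply_apply_eq_zero, hl₀', ← hτ']

end GorensteinRelInjective

section WeakInjective

variable {R : Type u} [Ring R]

theorem extVanish_succ_of_injective (n : ℕ) (N : ModuleCat.{u} R) {W : ModuleCat.{u} R}
    (hW : Module.Injective R W) : ExtVanish R (n + 1) N W := by
  obtain ⟨P⟩ := (inferInstance : HasProjectiveResolution N).out
  refine ModuleCat.subsingleton_of_isZero (Limits.IsZero.of_iso ?_ (P.isoExt (n + 1) W))
  rw [← HomologicalComplex.exactAt_iff_isZero_homology,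
    HomologicalComplex.exactAt_iff' _ n (n + 1) (n + 2) (by simp) (by simp),
    ShortComplex.moduleCat_exact_iff]
  intro (φ : P.complex.X (n + 1) ⟶ W) (hφ : P.complex.d (n + 2) (n + 1) ≫ φ = 0)
  obtain ⟨ψ, hψ⟩ := hW.exists_comp_eq (P.complex.d (n + 1) n).hom φ.hom (by
    intro x hx
    obtain ⟨y, rfl⟩ := (ShortComplex.moduleCat_exact_iff _).mp (P.exact_succ n) x hx
    simpa using congrArg (fun χ => χ.hom y) hφ)
  exact ⟨ModuleCat.ofHom ψ, ModuleCat.hom_ext hψ⟩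

theorem weakInjective_of_injective {W : ModuleCat.{u} R} (hW : Module.Injective R W) :
    WeakInjective R W :=
  fun N _ => extVanish_succ_of_injective 0 N hW

end WeakInjective

section Coresolution

open LinearMap

variable {R : Type u} [Ring R] {𝒢 : ModuleCat.{u} R → Prop}

def CoresolutionDimLE (𝒢 : ModuleCat.{u} R → Prop) (M : ModuleCat.{u} R) (n : ℕ) : Prop :=
  ∃ (G : ℕ → ModuleCat.{u} R) (d : ∀ i, G i →ₗ[R] G (i + 1)) (ε : M →ₗ[R] G 0),
    IsFiniteCoresolution R M n G d ε ∧ ∀ i, 𝒢 (G i)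

theorem CoresolutionDimLE.zero_of_mem (h0 : 𝒢 (ModuleCat.of R PUnit)) {M : ModuleCat.{u} R}
    (hM : 𝒢 M) : CoresolutionDimLE 𝒢 M 0 := by
  let G : ℕ → ModuleCat.{u} R
    | 0 => M
    | _ + 1 => ModuleCat.of R PUnit
  have hG (i : ℕ) (x : G (i + 1)) : x = 0 := Subsingleton.elim (α := PUnit) _ _
  refine ⟨G, fun _ => 0, LinearMap.id, ⟨fun _ _ => id, fun y => ?_, fun i y => ?_, ?_⟩, ?_⟩
  · simp [hG 0 _]
  · simp [hG i y]
  · rintro (_ | i) hi x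
    · omega
    · exact hG i x
  · rintro (_ | i)
    · exact hM
    · exact h0

theorem CoresolutionDimLE.exists_bijective {M : ModuleCat.{u} R}
    (h : CoresolutionDimLE 𝒢 M 0) :
    ∃ (G : ModuleCat.{u} R) (ε : M →ₗ[R] G), 𝒢 G ∧ Function.Bijective ε := by
  obtain ⟨G, d, ε, ⟨hε, hεd, -, hzero⟩, hG⟩ := h
  exact ⟨G 0, ε, hG 0, hε, fun y => (hεd y).mp (hzero 1 one_pos _)⟩

theorem CoresolutionDimLE.succ_of_shortExact {M G C : ModuleCat.{u} R} {ε : M →ₗ[R] G}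
    {q : G →ₗ[R] C} {n : ℕ} (hG : 𝒢 G) (hεq : ShortExactSeq R M G C ε q)
    (hC : CoresolutionDimLE 𝒢 C n) : CoresolutionDimLE 𝒢 M (n + 1) := by
  obtain ⟨Gs, d, εC, ⟨hεC, hεCd, hd, hzero⟩, hGs⟩ := hC
  let G' : ℕ → ModuleCat.{u} R
    | 0 => G
    | i + 1 => Gs i
  let d' : ∀ i, G' i →ₗ[R] G' (i + 1)
    | 0 => εC ∘ₗ q
    | i + 1 => d i
  refine ⟨G', d', ε, ⟨hεq.1, hεC.comp_exact_iff_exact.mpr hεq.2.2, ?_, ?_⟩, ?_⟩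
  · rintro (_ | i)
    · exact hεq.2.1.comp_exact_iff_exact.mpr hεCd
    · exact hd i
  · rintro (_ | i) hi
    · omega
    · exact hzero i (by omega)
  · rintro (_ | i)
    · exact hG
    · exact hGs i

theorem CoresolutionDimLE.exists_shortExact {M : ModuleCat.{u} R} {n : ℕ}
    (h : CoresolutionDimLE 𝒢 M (n + 1)) :
    ∃ (G C : ModuleCat.{u} R) (ε : M →ₗ[R] G) (q : G →ₗ[R] C),
      𝒢 G ∧ ShortExactSeq R M G C ε q ∧ CoresolutionDimLE 𝒢 C n := by
  obtain ⟨G, d, ε, ⟨hε, hεd, hd, hzero⟩, hG⟩ := h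
  let εC := (range ε).liftQ (d 0) (hεd.linearMap_ker_eq ▸ le_refl _)
  refine ⟨G 0, ModuleCat.of R (G 0 ⧸ range ε), ε, (range ε).mkQ, hG 0,
    ⟨hε, Submodule.mkQ_surjective _, exact_map_mkQ_range ε⟩,
    fun i => G (i + 1), fun i => d (i + 1), εC,
    ⟨injective_range_liftQ_of_exact hεd, ?_, fun i => hd (i + 1),
      fun i hi => hzero (i + 1) (by omega)⟩, fun i => hG (i + 1)⟩
  exact (Submodule.mkQ_surjective _).comp_exact_iff_exact.mp (hd 0)

end Coresolution

section CosyzygyClass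

open LinearMap

variable {R : Type u} [Ring R]

/-- Closure properties shared by the Gorenstein injective and Gorenstein weak injective
modules. -/
structure IsCosyzygyClass (𝒢 : ModuleCat.{u} R → Prop) : Prop where
  of_injective {E : ModuleCat.{u} R} : Module.Injective R E → 𝒢 E
  of_shortExact {A X B : ModuleCat.{u} R} {f : A →ₗ[R] X} {g : X →ₗ[R] B} :
    ShortExactSeq R A X B f g → 𝒢 A → 𝒢 B → 𝒢 X
  exists_cosyzygy {G : ModuleCat.{u} R} : 𝒢 G →
    ∃ (E C : ModuleCat.{u} R) (e : G →ₗ[R] E) (q : E →ₗ[R] C),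
      Module.Injective R E ∧ ShortExactSeq R G E C e q ∧ 𝒢 C

/-- An exact sequence `0 → X → E⁰ → ⋯ → Eⁿ⁻¹ → G → 0` with injective `Eⁱ` and `G ∈ 𝒢`. -/
def HasInjCoresolution (𝒢 : ModuleCat.{u} R → Prop) : ℕ → ModuleCat.{u} R → Prop
  | 0, X => 𝒢 X
  | n + 1, X => ∃ (E C : ModuleCat.{u} R) (e : X →ₗ[R] E) (q : E →ₗ[R] C),
      Module.Injective R E ∧ ShortExactSeq R X E C e q ∧ HasInjCoresolution 𝒢 n C

namespace IsCosyzygyClass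

variable {𝒢 : ModuleCat.{u} R → Prop}

theorem of_bijective (h𝒢 : IsCosyzygyClass 𝒢) {X Y : ModuleCat.{u} R} {ε : X →ₗ[R] Y}
    (hε : Function.Bijective ε) (hY : 𝒢 Y) : 𝒢 X :=
  h𝒢.of_shortExact (A := ModuleCat.of R PUnit) (f := 0)
    ⟨fun _ _ _ => Subsingleton.elim _ _, hε.2, by simpa using hε.1⟩
    (h𝒢.of_injective Module.Injective.of_subsingleton) hY

theorem exists_cosyzygy_of_hasInjCoresolution (h𝒢 : IsCosyzygyClass 𝒢) {n : ℕ}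
    {X : ModuleCat.{u} R} (h : HasInjCoresolution 𝒢 n X) :
    ∃ (E C : ModuleCat.{u} R) (e : X →ₗ[R] E) (q : E →ₗ[R] C), Module.Injective R E ∧
      ShortExactSeq R X E C e q ∧ HasInjCoresolution 𝒢 (n - 1) C := by
  cases n with
  | zero => exact h𝒢.exists_cosyzygy h
  | succ n => exact h

/-- Horseshoe lemma: `D` embeds into `E × E'` with a cokernel `T` in `0 → C₁ → T → C₁' → 0`. -/
theorem exists_hasInjCoresolution_middle (h𝒢 : IsCosyzygyClass 𝒢) {C D C' : ModuleCat.{u} R}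
    {i : C →ₗ[R] D} {p : D →ₗ[R] C'} (hip : ShortExactSeq R C D C' i p) {m m' : ℕ}
    (hC : HasInjCoresolution 𝒢 m C) (hC' : HasInjCoresolution 𝒢 m' C') :
    ∃ k, HasInjCoresolution 𝒢 k D := by
  induction hs : m + m' using Nat.strong_induction_on generalizing C D C' m m' with
  | _ s ih =>
  by_cases h0 : m = 0 ∧ m' = 0
  · obtain ⟨rfl, rfl⟩ := h0
    exact ⟨0, h𝒢.of_shortExact hip hC hC'⟩
  obtain ⟨E, C₁, e, q, hE, heq, hC₁⟩ := h𝒢.exists_cosyzygy_of_hasInjCoresolution hC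
  obtain ⟨E', C₁', e', q', hE', heq', hC₁'⟩ := h𝒢.exists_cosyzygy_of_hasInjCoresolution hC'
  obtain ⟨Z, _, _, _, _, hDZ, hEZ⟩ := hip.exists_pushout heq
  obtain ⟨_, _, hZ⟩ := hEZ.exists_prod_of_injective hE heq'
  obtain ⟨T, pT, _, _, hDT, hT⟩ := hDZ.exists_quotient_comp hZ
  obtain ⟨k, hk⟩ := ih _ (by omega) hT hC₁ hC₁' rfl
  exact ⟨k + 1, _, T, _, pT, Module.Injective.prod, hDT, hk⟩

theorem coresolutionDimLE_of_hasInjCoresolution (h𝒢 : IsCosyzygyClass 𝒢) {n : ℕ}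
    {X : ModuleCat.{u} R} (h : HasInjCoresolution 𝒢 n X) : CoresolutionDimLE 𝒢 X n := by
  induction n generalizing X with
  | zero => exact CoresolutionDimLE.zero_of_mem (h𝒢.of_injective .of_subsingleton) h
  | succ n ih =>
    obtain ⟨E, C, e, q, hE, heq, hC⟩ := h
    exact CoresolutionDimLE.succ_of_shortExact (h𝒢.of_injective hE) heq (ih hC)

theorem exists_hasInjCoresolution_of_coresolutionDimLE (h𝒢 : IsCosyzygyClass 𝒢) {n : ℕ}
    {X : ModuleCat.{u} R} (h : CoresolutionDimLE 𝒢 X n) : ∃ k, HasInjCoresolution 𝒢 k X := by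
  induction n generalizing X with
  | zero =>
    obtain ⟨G, ε, hG, hε⟩ := h.exists_bijective
    exact ⟨0, h𝒢.of_bijective hε hG⟩
  | succ n ih =>
    obtain ⟨G, C, ε, q, hG, hεq, hC⟩ := h.exists_shortExact
    obtain ⟨m, hm⟩ := ih hC
    obtain ⟨E, G', e, q', hE, heq, hG'⟩ := h𝒢.exists_cosyzygy hG
    obtain ⟨D, p, _, _, hXD, hD⟩ := hεq.exists_quotient_comp heq
    obtain ⟨k, hk⟩ := h𝒢.exists_hasInjCoresolution_middle hD hm (m' := 0) hG'
    exact ⟨k + 1, E, D, _, p, hE, hXD, hk⟩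

theorem exists_coresolutionDimLE_iff (h𝒢 : IsCosyzygyClass 𝒢) {X : ModuleCat.{u} R} :
    (∃ n, CoresolutionDimLE 𝒢 X n) ↔ ∃ k, HasInjCoresolution 𝒢 k X :=
  ⟨fun ⟨_, h⟩ => h𝒢.exists_hasInjCoresolution_of_coresolutionDimLE h,
    fun ⟨k, h⟩ => ⟨k, h𝒢.coresolutionDimLE_of_hasInjCoresolution h⟩⟩

theorem exists_hasInjCoresolution_left (h𝒢 : IsCosyzygyClass 𝒢) {L M N : ModuleCat.{u} R}
    {f : L →ₗ[R] M} {g : M →ₗ[R] N} (hfg : ShortExactSeq R L M N f g) {m n : ℕ}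
    (hM : HasInjCoresolution 𝒢 m M) (hN : HasInjCoresolution 𝒢 n N) :
    ∃ k, HasInjCoresolution 𝒢 k L := by
  obtain ⟨E, M₁, e, q, hE, heq, hM₁⟩ := h𝒢.exists_cosyzygy_of_hasInjCoresolution hM
  obtain ⟨V, p, _, _, hLV, hV⟩ := hfg.exists_quotient_comp heq
  obtain ⟨k, hk⟩ := h𝒢.exists_hasInjCoresolution_middle hV hN hM₁
  exact ⟨k + 1, E, V, _, p, hE, hLV, hk⟩

theorem exists_hasInjCoresolution_right (h𝒢 : IsCosyzygyClass 𝒢) {L M N : ModuleCat.{u} R}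
    {f : L →ₗ[R] M} {g : M →ₗ[R] N} (hfg : ShortExactSeq R L M N f g) {l m : ℕ}
    (hL : HasInjCoresolution 𝒢 l L) (hM : HasInjCoresolution 𝒢 m M) :
    ∃ k, HasInjCoresolution 𝒢 k N := by
  obtain ⟨F, L₁, e, q, hF, heq, hL₁⟩ := h𝒢.exists_cosyzygy_of_hasInjCoresolution hL
  obtain ⟨Z, _, _, _, _, hMZ, hFZ⟩ := hfg.exists_pushout heq
  obtain ⟨k, hZ⟩ := h𝒢.exists_hasInjCoresolution_middle hMZ hM hL₁
  obtain ⟨E, Z₁, v, q₁, hE, hZq, hZ₁⟩ := h𝒢.exists_cosyzygy_of_hasInjCoresolution hZ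
  obtain ⟨V, _, ι, ρ, hFV, hV⟩ := hFZ.exists_quotient_comp hZq
  exact ⟨k - 1 + 1, V, Z₁, ι, ρ, hFV.injective_right hF hE, hV, hZ₁⟩

end IsCosyzygyClass

end CosyzygyClass

theorem isCosyzygyClass_gorensteinRelInjective {R : Type u} [Ring R]
    {𝒯 : ModuleCat.{u} R → Prop} (h𝒯 : ∀ E : ModuleCat.{u} R, Module.Injective R E → 𝒯 E) :
    IsCosyzygyClass (GorensteinRelInjective R 𝒯) where
  of_injective := GorensteinRelInjective.of_injective
  of_shortExact := GorensteinRelInjective.of_shortExact h𝒯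
  exists_cosyzygy hG :=
    let ⟨E, C, e, q, hE, heq, hC, _⟩ := hG.exists_cosyzygy
    ⟨E, C, e, q, hE, heq, hC⟩

-- `GwidLE R` is `CoresolutionDimLE (GorensteinWeakInjective R)` by definition.
theorem exists_gwidLE_iff {R : Type u} [Ring R] {X : ModuleCat.{u} R} :
    (∃ n, GwidLE R X n) ↔ ∃ k, HasInjCoresolution (GorensteinWeakInjective R) k X :=
  (isCosyzygyClass_gorensteinRelInjective fun _ => weakInjective_of_injective)
    |>.exists_coresolutionDimLE_iff

/-- In a short exact sequence `0 → L → M → N → 0`, if any two of `L`, `M`, `N` have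
finite Gorenstein weak injective dimension then so does the third. -/
theorem gwid_two_of_three (L M N : ModuleCat.{u} R)
    (f : L →ₗ[R] M) (g : M →ₗ[R] N) (hse : ShortExactSeq R L M N f g) :
    ((∃ k : ℕ, GwidLE R L k) → (∃ k : ℕ, GwidLE R M k) → ∃ k : ℕ, GwidLE R N k) ∧
    ((∃ k : ℕ, GwidLE R L k) → (∃ k : ℕ, GwidLE R N k) → ∃ k : ℕ, GwidLE R M k) ∧
    ((∃ k : ℕ, GwidLE R M k) → (∃ k : ℕ, GwidLE R N k) → ∃ k : ℕ, GwidLE R L k) := by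
  have h𝒢 := isCosyzygyClass_gorensteinRelInjective (R := R) fun _ => weakInjective_of_injective
  simp only [exists_gwidLE_iff]
  exact ⟨fun ⟨_, hL⟩ ⟨_, hM⟩ => h𝒢.exists_hasInjCoresolution_right hse hL hM,
    fun ⟨_, hL⟩ ⟨_, hN⟩ => h𝒢.exists_hasInjCoresolution_middle hse hL hN,
    fun ⟨_, hM⟩ ⟨_, hN⟩ => h𝒢.exists_hasInjCoresolution_left hse hM hN⟩
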